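/- arXiv:1308.6696 — 2 statements merged into one kernel-verified Lean document; each statement's English description precedes it below -/
import Mathlib

section
/- For every real q < √2 there exists n₀ such that for every n ≥ n₀: every n-uniform hypergraph whose chromatic number is greater than 2 has at least q · (n/ln n)^{1/2} · 2^{n−1} edges; that is, m(n) ≥ q · (n/ln n)^{1/2} · 2^{n−1}. -/
/-!
The Cherkashin–Kozik form of the Radhakrishnan–Srinivasan argument. Order the vertices by a
uniformly random `σ : V → Fin N` and colour greedily: scanning in `σ`-order, a vertex turns red
when it is the last vertex of an edge whose other vertices are all blue. If this colouring has a
monochromatic edge, then `σ` has a collision, or some edge lies entirely below `a ≈ (1-p)N/2`, or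
some edge lies entirely above `N - a`, or two edges `e`, `f` meet in a single vertex `u` which is
the last vertex of `e`, the first vertex of `f`, and has `σ u` in the middle window. With `m`
edges and `k = m / 2^(n-1)` these events have probabilities at most `O(1/N)`, `k(1-p)^n/2`,
`k(1-p)^n/2` and `k²p + O(1/N)`, so letting `N → ∞` gives `1 ≤ k(1-p)^n + k²p`.
If `m ≤ q √(n / ln n) 2^(n-1)`, the choice `p = ln n / (2n)` turns this into
`1 ≤ q / √(ln n) + q²/2`, which fails for large `n` when `q < √2`.
-/

open Finset Function Fintype

variable {V α : Type*}

def NotTwoColorable (E : Finset (Finset V)) : Prop :=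
  ∀ c : V → Fin 2, ∃ A ∈ E, ∃ i : Fin 2, ∀ v ∈ A, c v = i

section Greedy
variable [LinearOrder α]
attribute [local instance] WellFoundedLT.toWellFoundedRelation

-- The `∃ _ :` binder makes `σ w < σ v` available to the termination proof.
def IsGreedyRed [WellFoundedLT α] (E : Finset (Finset V)) (σ : V → α) (v : V) : Prop :=
  ∃ e ∈ E, v ∈ e ∧ ∀ w ∈ e, w ≠ v → ∃ _ : σ w < σ v, ¬ IsGreedyRed E σ w
termination_by σ v

variable [WellFoundedLT α]

lemma isGreedyRed_iff {E : Finset (Finset V)} {σ : V → α} {v : V} :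
    IsGreedyRed E σ v ↔
      ∃ e ∈ E, v ∈ e ∧ ∀ w ∈ e, w ≠ v → σ w < σ v ∧ ¬ IsGreedyRed E σ w := by
  rw [IsGreedyRed]
  simp only [exists_prop]

lemma NotTwoColorable.exists_conflict [DecidableEq V] {E : Finset (Finset V)}
    (hE : NotTwoColorable E) (hne : ∀ e ∈ E, e.Nonempty) {σ : V → α} (hσ : Injective σ) :
    ∃ e ∈ E, ∃ f ∈ E, ∃ u, e ∩ f = {u} ∧
      (∀ w ∈ e, w ≠ u → σ w < σ u) ∧ (∀ w ∈ f, w ≠ u → σ u < σ w) := by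
  classical
  -- An all-blue edge would have turned its last vertex red, so the monochromatic edge `A` is red;
  -- its first vertex is red because of an edge whose other vertices are blue, so it meets `A` once.
  obtain ⟨A, hA, i, hi⟩ := hE fun v => if IsGreedyRed E σ v then 1 else 0
  have hmono : ∀ v ∈ A, ∀ w ∈ A, IsGreedyRed E σ v → IsGreedyRed E σ w := by
    intro v hv w hw hv'
    have := (hi v hv).trans (hi w hw).symm
    split_ifs at this <;> simp_all
  have hred : ∀ v ∈ A, IsGreedyRed E σ v := by
    obtain ⟨u, hu, hmax⟩ := A.exists_max_image σ (hne A hA)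
    suffices IsGreedyRed E σ u from fun v hv => hmono u hu v hv this
    by_contra hu'
    exact hu' <| isGreedyRed_iff.2 ⟨A, hA, hu, fun w hw hwu =>
      ⟨(hmax w hw).lt_of_ne (hσ.ne hwu), fun hw' => hu' (hmono w hw u hu hw')⟩⟩
  obtain ⟨u, hu, hmin⟩ := A.exists_min_image σ (hne A hA)
  obtain ⟨e, he, hue, hlt⟩ := isGreedyRed_iff.1 (hred u hu)
  refine ⟨e, he, A, hA, u, ?_, fun w hw hwu => (hlt w hw hwu).1,
    fun w hw hwu => (hmin w hw).lt_of_ne (hσ.ne hwu.symm)⟩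
  refine eq_singleton_iff_unique_mem.2 ⟨mem_inter.2 ⟨hue, hu⟩, fun w hw => ?_⟩
  by_contra hwu
  exact (hlt w (mem_inter.1 hw).1 hwu).2 (hred w (mem_inter.1 hw).2)

end Greedy

section Density
variable [Fintype V] [DecidableEq V] [Fintype α]

lemma dens_piFinset (T : V → Finset α) : (piFinset T).dens = ∏ v, (T v).dens := by
  simp only [dens_eq_card_div_card, card_piFinset, Fintype.card_pi, Nat.cast_prod,
    prod_div_distrib]

lemma dens_piFinset_ite_mem [Nonempty α] (s : Finset V) (S : V → Finset α) :
    (piFinset fun v => if v ∈ s then S v else univ).dens = ∏ v ∈ s, (S v).dens := by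
  rw [dens_piFinset, ← Fintype.prod_ite_mem s]
  refine prod_congr rfl fun v _ => ?_
  split_ifs <;> simp

lemma dens_mul_dens_le_of_disjoint [DecidableEq α] {s t : Finset α} (h : Disjoint s t) :
    s.dens * t.dens ≤ 4⁻¹ := by
  have hsum : s.dens + t.dens ≤ 1 := dens_union_of_disjoint h ▸ dens_le_one
  have := (four_mul_le_sq_add s.dens t.dens).trans (pow_le_one₀ (by positivity) hsum)
  rw [mul_assoc] at this
  exact ((le_inv_mul_iff₀ (by norm_num : (0 : ℚ≥0) < 4)).2 (by simpa using this)).trans_eq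
    (mul_one _)

def mapsToEvent (s : Finset V) (S : Finset α) : Finset (V → α) :=
  piFinset fun v => if v ∈ s then S else univ

lemma mem_mapsToEvent {s : Finset V} {S : Finset α} {σ : V → α} :
    σ ∈ mapsToEvent s S ↔ ∀ v ∈ s, σ v ∈ S := by
  simp only [mapsToEvent, Fintype.mem_piFinset]
  exact forall_congr' fun v => by split_ifs with hv <;> simp [hv]

lemma dens_mapsToEvent [Nonempty α] (s : Finset V) (S : Finset α) :
    (mapsToEvent s S).dens = S.dens ^ #s := by
  rw [mapsToEvent, dens_piFinset_ite_mem, prod_const]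

lemma dens_not_injective_le [DecidableEq α] [Nonempty α] :
    ({σ | ¬ Injective σ} : Finset (V → α)).dens ≤ card V ^ 2 / card α := by
  have hsub : ({σ | ¬ Injective σ} : Finset (V → α)) ⊆
      univ.offDiag.biUnion fun xy => univ.biUnion fun c => mapsToEvent {xy.1, xy.2} {c} := by
    intro σ hσ
    simp only [Injective, mem_filter, mem_univ, true_and, not_forall] at hσ
    obtain ⟨x, y, hxy, hne⟩ := hσ
    simp only [mem_biUnion, mem_offDiag, mem_univ, true_and, mem_mapsToEvent]
    exact ⟨(x, y), hne, σ y, by simp [hxy]⟩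
  calc _ ≤ ∑ xy ∈ univ.offDiag, ∑ c : α, (mapsToEvent {xy.1, xy.2} {c}).dens :=
        (dens_le_dens hsub).trans (dens_biUnion_le.trans (sum_le_sum fun _ _ => dens_biUnion_le))
    _ = ∑ xy ∈ (univ : Finset V).offDiag, (card α : ℚ≥0)⁻¹ := by
        refine sum_congr rfl fun xy hxy => ?_
        simp only [dens_mapsToEvent, dens_singleton, card_pair (mem_offDiag.1 hxy).2.2,
          sum_const, card_univ, nsmul_eq_mul]
        field_simp
    _ ≤ card V ^ 2 / card α := by
        rw [sum_const, nsmul_eq_mul, div_eq_mul_inv, offDiag_card, card_univ]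
        gcongr
        exact_mod_cast (Nat.sub_le _ _).trans (by rw [sq])

section Conflict
variable [LinearOrder α]

def conflictEvent (e f : Finset V) (t : α) : Finset (V → α) :=
  {σ | ∃ u, e ∩ f = {u} ∧ σ u = t ∧
    (∀ w ∈ e, w ≠ u → σ w < t) ∧ (∀ w ∈ f, w ≠ u → t < σ w)}

lemma conflictEvent_subset {e f : Finset V} {u : V} (hu : e ∩ f = {u}) (t : α) :
    conflictEvent e f t ⊆ piFinset fun v => if v ∈ e ∪ f.erase u then
      (if v = u then {t} else if v ∈ e then univ.filter (· < t) else univ.filter (t < ·))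
      else univ := by
  intro σ hσ
  simp only [conflictEvent, mem_filter, mem_univ, true_and] at hσ
  obtain ⟨u', hu', hσu, hlt, hgt⟩ := hσ
  obtain rfl : u = u' := singleton_injective (hu.symm.trans hu')
  refine Fintype.mem_piFinset.2 fun v => ?_
  by_cases hv : v = u
  · subst hv
    simp [hσu, (mem_inter.1 (hu ▸ mem_singleton_self v)).1]
  by_cases hve : v ∈ e
  · simp [hv, hve, hlt v hve hv]
  by_cases hvf : v ∈ f
  · simp [hv, hve, hvf, hgt v hvf hv]
  · simp [hv, hve, hvf]

lemma dens_conflictEvent_le [Nonempty α] {e f : Finset V} {n : ℕ} (he : #e = n) (hf : #f = n)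
    (t : α) : (conflictEvent e f t).dens ≤ (card α : ℚ≥0)⁻¹ * 4⁻¹ ^ (n - 1) := by
  by_cases h : ∃ u, e ∩ f = {u}
  swap
  · rw [show conflictEvent e f t = ∅ from
      filter_false_of_mem fun σ _ ⟨u, hu, _⟩ => h ⟨u, hu⟩]
    simp
  obtain ⟨u, hu⟩ := h
  have hue : u ∈ e := (mem_inter.1 (hu ▸ mem_singleton_self u)).1
  have huf : u ∈ f := (mem_inter.1 (hu ▸ mem_singleton_self u)).2
  have hfe : ∀ w ∈ f.erase u, w ∉ e := fun w hw hwe =>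
    (mem_erase.1 hw).1 (mem_singleton.1 (hu ▸ mem_inter.2 ⟨hwe, (mem_erase.1 hw).2⟩))
  set lo : Finset α := univ.filter (· < t)
  set hi : Finset α := univ.filter (t < ·)
  set S : V → Finset α := fun v => if v = u then {t} else if v ∈ e then lo else hi
  have hlo : ∏ v ∈ e.erase u, (S v).dens = lo.dens ^ (n - 1) := by
    rw [Finset.prod_congr rfl (g := fun _ => lo.dens) fun v hv => by
        simp [S, (mem_erase.1 hv).1, (mem_erase.1 hv).2],
      prod_const, card_erase_of_mem hue, he]
  have hhi : ∏ v ∈ f.erase u, (S v).dens = hi.dens ^ (n - 1) := by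
    rw [Finset.prod_congr rfl (g := fun _ => hi.dens) fun v hv => by
        simp [S, (mem_erase.1 hv).1, hfe v hv],
      prod_const, card_erase_of_mem huf, hf]
  calc (conflictEvent e f t).dens ≤ ∏ v ∈ e ∪ f.erase u, (S v).dens :=
        (dens_le_dens (conflictEvent_subset hu t)).trans_eq (dens_piFinset_ite_mem _ _)
    _ = (card α : ℚ≥0)⁻¹ * (lo.dens * hi.dens) ^ (n - 1) := by
        rw [prod_union (disjoint_right.2 hfe), ← mul_prod_erase e _ hue, hlo, hhi, mul_pow,
          mul_assoc]
        simp [S]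
    _ ≤ (card α : ℚ≥0)⁻¹ * 4⁻¹ ^ (n - 1) := by
        gcongr
        exact dens_mul_dens_le_of_disjoint (disjoint_filter.2 fun _ _ h => lt_asymm h)

variable [DecidableEq α]

lemma NotTwoColorable.univ_subset {E : Finset (Finset V)} (hE : NotTwoColorable E)
    (hne : ∀ e ∈ E, e.Nonempty) (a b : α) :
    univ ⊆ ({σ | ¬ Injective σ} : Finset (V → α))
      ∪ E.biUnion (mapsToEvent · (univ.filter (· < a)))
      ∪ E.biUnion (mapsToEvent · (univ.filter (b < ·)))
      ∪ (E ×ˢ E ×ˢ univ.filter fun t => a ≤ t ∧ t ≤ b).biUnion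
          fun x => conflictEvent x.1 x.2.1 x.2.2 := by
  intro σ _
  by_cases hσ : Injective σ
  swap
  · simp [hσ]
  obtain ⟨e, he, f, hf, u, hu, hlt, hgt⟩ := hE.exists_conflict hne hσ
  rcases lt_or_ge (σ u) a with ha | ha
  · refine mem_union_left _ (mem_union_left _ (mem_union_right _ (mem_biUnion.2 ⟨e, he, ?_⟩)))
    refine mem_mapsToEvent.2 fun v hv => mem_filter.2 ⟨mem_univ _, ?_⟩
    exact if h : v = u then h ▸ ha else (hlt v hv h).trans ha
  rcases lt_or_ge b (σ u) with hb | hb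
  · refine mem_union_left _ (mem_union_right _ (mem_biUnion.2 ⟨f, hf, ?_⟩))
    refine mem_mapsToEvent.2 fun v hv => mem_filter.2 ⟨mem_univ _, ?_⟩
    exact if h : v = u then h ▸ hb else hb.trans (hgt v hv h)
  refine mem_union_right _ (mem_biUnion.2 ⟨(e, f, σ u), by simp [he, hf, ha, hb], ?_⟩)
  simp only [conflictEvent, mem_filter, mem_univ, true_and]
  exact ⟨u, hu, rfl, hlt, hgt⟩

lemma NotTwoColorable.one_le_sum_dens [Nonempty α] {E : Finset (Finset V)}
    (hE : NotTwoColorable E) {n : ℕ} (hn : 1 ≤ n) (hcard : ∀ e ∈ E, #e = n) (a b : α) :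
    1 ≤ (card V : ℚ≥0) ^ 2 / card α + #E * (univ.filter (· < a)).dens ^ n
      + #E * (univ.filter (b < ·)).dens ^ n
      + #E ^ 2 * (univ.filter fun t => a ≤ t ∧ t ≤ b).dens * 4⁻¹ ^ (n - 1) := by
  set mid : Finset α := univ.filter fun t => a ≤ t ∧ t ≤ b
  have hdens (S : Finset α) : ∑ e ∈ E, (mapsToEvent e S).dens = #E * S.dens ^ n := by
    rw [Finset.sum_congr rfl fun e he => by rw [dens_mapsToEvent, hcard e he], sum_const,
      nsmul_eq_mul]
  calc (1 : ℚ≥0) = (univ : Finset (V → α)).dens := dens_univ.symm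
    _ ≤ ({σ | ¬ Injective σ} : Finset (V → α)).dens
        + ∑ e ∈ E, (mapsToEvent e (univ.filter (· < a))).dens
        + ∑ e ∈ E, (mapsToEvent e (univ.filter (b < ·))).dens
        + ∑ x ∈ E ×ˢ E ×ˢ mid, (conflictEvent x.1 x.2.1 x.2.2).dens := by
      have hne : ∀ e ∈ E, e.Nonempty := fun e he => card_pos.1 (hcard e he ▸ hn)
      refine (dens_le_dens (hE.univ_subset hne a b)).trans ?_
      refine (dens_union_le _ _).trans (add_le_add ?_ dens_biUnion_le)
      refine (dens_union_le _ _).trans (add_le_add ?_ dens_biUnion_le)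
      exact (dens_union_le _ _).trans (add_le_add le_rfl dens_biUnion_le)
    _ ≤ _ := by
      rw [hdens, hdens]
      gcongr
      · exact dens_not_injective_le
      · refine (sum_le_sum fun x hx => dens_conflictEvent_le (hcard _ (mem_product.1 hx).1)
          (hcard _ (mem_product.1 (mem_product.1 hx).2).1) x.2.2).trans_eq ?_
        rw [sum_const, nsmul_eq_mul, card_product, card_product, dens_eq_card_div_card mid]
        push_cast
        ring

end Conflict
end Density

open Real Filter Topology

lemma NotTwoColorable.one_le_of_two_mul_le [Fintype V] [DecidableEq V] {E : Finset (Finset V)}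
    (hE : NotTwoColorable E) {n : ℕ} (hn : 1 ≤ n) (hcard : ∀ e ∈ E, #e = n) {N A : ℕ}
    (hN : 0 < N) (hA : 2 * A ≤ N) :
    (1 : ℝ) ≤ Fintype.card V ^ 2 / N + 2 * #E * (A / N) ^ n
      + #E ^ 2 * ((N - 2 * A) / N) * 4⁻¹ ^ (n - 1) := by
  have : NeZero N := ⟨by omega⟩
  let a : Fin N := ⟨A, by omega⟩
  have hlow : (univ.filter (· < a)).dens = (A / N : ℚ≥0) := by
    rw [filter_gt_eq_Iio, dens_eq_card_div_card, Fin.card_Iio, Fintype.card_fin]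
  have hhigh : (univ.filter (a.rev < ·)).dens = (A / N : ℚ≥0) := by
    rw [filter_lt_eq_Ioi, dens_eq_card_div_card, Fin.card_Ioi, Fintype.card_fin, Fin.val_rev]
    congr 2
    dsimp only [a]
    omega
  have hmid :
      (univ.filter fun t => a ≤ t ∧ t ≤ a.rev).dens = ((N - 2 * A : ℕ) / N : ℚ≥0) := by
    rw [show univ.filter (fun t => a ≤ t ∧ t ≤ a.rev) = Icc a a.rev by ext; simp,
      dens_eq_card_div_card, Fin.card_Icc, Fintype.card_fin, Fin.val_rev]
    congr 2
    dsimp only [a]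
    omega
  have key := hE.one_le_sum_dens hn hcard a a.rev
  rw [hlow, hhigh, hmid] at key
  rw [Fintype.card_fin] at key
  generalize hM : N - 2 * A = M at key
  have key' := (NNRat.cast_le (K := ℝ)).2 key
  push_cast at key'
  rw [← hM, Nat.cast_sub hA] at key'
  push_cast at key'
  linarith

lemma NotTwoColorable.one_le_mul_one_sub_pow_add_add_div [Fintype V] [DecidableEq V]
    {E : Finset (Finset V)} (hE : NotTwoColorable E) {n : ℕ} (hn : 1 ≤ n)
    (hcard : ∀ e ∈ E, #e = n) {k : ℝ} (hk : (#E : ℝ) = k * 2 ^ (n - 1)) {p : ℝ} (hp0 : 0 ≤ p)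
    (hp1 : p ≤ 1) {N : ℕ} (hN : 0 < N) :
    1 ≤ k * (1 - p) ^ n + k ^ 2 * p + (Fintype.card V ^ 2 + 2 * k ^ 2) / N := by
  have hN' : (0 : ℝ) < N := Nat.cast_pos.2 hN
  set A := ⌊(1 - p) / 2 * N⌋₊
  have hAle : (A : ℝ) ≤ (1 - p) / 2 * N := Nat.floor_le (by positivity)
  have hAgt : (1 - p) / 2 * N - 1 < A := Nat.sub_one_lt_floor _
  have hA : 2 * A ≤ N := by
    have : (2 * A : ℝ) ≤ N := by nlinarith
    exact_mod_cast this
  have hlow : 2 * #E * ((A : ℝ) / N) ^ n ≤ k * (1 - p) ^ n := by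
    have hAN : (A : ℝ) / N ≤ (1 - p) / 2 := (div_le_iff₀ hN').2 hAle
    calc 2 * #E * ((A : ℝ) / N) ^ n ≤ 2 * #E * ((1 - p) / 2) ^ n := by gcongr
      _ = k * (1 - p) ^ n := by
          rw [hk, div_pow, show (2 : ℝ) ^ n = 2 * 2 ^ (n - 1) by rw [← pow_succ']; congr; omega]
          field_simp
  have hmid :
      (#E : ℝ) ^ 2 * ((N - 2 * A) / N) * 4⁻¹ ^ (n - 1) ≤ k ^ 2 * p + 2 * k ^ 2 / N := by
    have hk2 : (#E : ℝ) ^ 2 * 4⁻¹ ^ (n - 1) = k ^ 2 := by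
      rw [hk, mul_pow, ← pow_mul, mul_comm (n - 1), pow_mul, mul_assoc, ← mul_pow]
      norm_num
    calc (#E : ℝ) ^ 2 * ((N - 2 * A) / N) * 4⁻¹ ^ (n - 1)
        = k ^ 2 * ((N - 2 * A) / N) := by rw [← hk2]; ring
      _ ≤ k ^ 2 * (p + 2 / N) := by
          gcongr
          rw [div_le_iff₀ hN', add_mul, div_mul_cancel₀ _ hN'.ne']
          linarith
      _ = k ^ 2 * p + 2 * k ^ 2 / N := by ring
  have h := hE.one_le_of_two_mul_le hn hcard hN hA
  rw [add_div]
  linarith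

lemma NotTwoColorable.one_le_mul_one_sub_pow_add [Fintype V] [DecidableEq V]
    {E : Finset (Finset V)} (hE : NotTwoColorable E) {n : ℕ} (hn : 1 ≤ n)
    (hcard : ∀ e ∈ E, #e = n) {k : ℝ} (hk : (#E : ℝ) = k * 2 ^ (n - 1)) {p : ℝ} (hp0 : 0 ≤ p)
    (hp1 : p ≤ 1) :
    1 ≤ k * (1 - p) ^ n + k ^ 2 * p := by
  have hlim := (tendsto_const_div_atTop_nhds_zero_nat
    (Fintype.card V ^ 2 + 2 * k ^ 2 : ℝ)).const_add (k * (1 - p) ^ n + k ^ 2 * p)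
  rw [add_zero] at hlim
  exact ge_of_tendsto hlim ((eventually_gt_atTop 0).mono fun N hN =>
    hE.one_le_mul_one_sub_pow_add_add_div hn hcard hk hp0 hp1 hN)

lemma NotTwoColorable.one_le_div_sqrt_log_add [Fintype V] {E : Finset (Finset V)}
    (hE : NotTwoColorable E) {n : ℕ} (hn : 2 ≤ n) (hcard : ∀ e ∈ E, #e = n) {q : ℝ}
    (hm : #E ≤ q * √(n / log n) * 2 ^ (n - 1)) :
    1 ≤ q / √(log n) + q ^ 2 / 2 := by
  classical
  have hn' : (2 : ℝ) ≤ n := by exact_mod_cast hn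
  set L := log n
  have hL : 0 < L := log_pos (by linarith)
  have hLn : L ≤ n := (log_le_sub_one_of_pos (by linarith)).trans (by linarith)
  set p := L / (2 * n)
  have hp1 : p ≤ 1 := (div_le_one (by positivity)).2 (by linarith)
  set k : ℝ := #E / 2 ^ (n - 1)
  have key := hE.one_le_mul_one_sub_pow_add (by omega) hcard (k := k)
    (by simp only [k]; field_simp) (by positivity) hp1
  have hk : k ≤ q * √(n / L) := (div_le_iff₀ (by positivity)).2 hm
  have hk0 : 0 ≤ k := by positivity
  have hpow : (1 - p) ^ n ≤ (√n)⁻¹ := by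
    have h := one_sub_div_pow_le_exp_neg (n := n) (t := L / 2) (by linarith)
    rwa [div_div, exp_neg, show L / 2 = log √n by rw [log_sqrt (by positivity)],
      exp_log (by positivity)] at h
  have h1 : k * (1 - p) ^ n ≤ q / √L := by
    calc k * (1 - p) ^ n ≤ q * √(n / L) * (√n)⁻¹ :=
          mul_le_mul hk hpow (pow_nonneg (by linarith) _) (hk0.trans hk)
      _ = q / √L := by
          rw [sqrt_div' _ hL.le]
          field_simp
  have h2 : k ^ 2 * p ≤ q ^ 2 / 2 := by
    calc k ^ 2 * p ≤ (q * √(n / L)) ^ 2 * p := by gcongr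
      _ = q ^ 2 / 2 := by
          rw [mul_pow, sq_sqrt (by positivity)]
          simp only [p]
          field_simp
  linarith

/-- Theorem 1 (Radhakrishnan–Srinivasan): for every real `q < √2` there is `n₀` such that
for all `n ≥ n₀`, every `n`-uniform hypergraph with chromatic number greater than `2` has
at least `q · (n / ln n)^{1/2} · 2^{n−1}` edges. -/
theorem stmt_2 (q : ℝ) (hq : q < Real.sqrt 2) :
    ∃ n₀ : ℕ, ∀ n ≥ n₀,
      ∀ (V : Type) [Fintype V] [DecidableEq V] (E : Finset (Finset V)),
        (∀ A ∈ E, A.card = n) →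
        (∀ c : V → Fin 2, ∃ A ∈ E, ∃ i : Fin 2, ∀ v ∈ A, c v = i) →
        (E.card : ℝ) ≥
          q * ((n : ℝ) / Real.log n) ^ ((1 : ℝ) / 2) * (2 : ℝ) ^ (n - 1) := by
  rcases le_or_gt q 0 with hq0 | hq0
  · refine ⟨0, fun n _ V _ _ E _ _ => ?_⟩
    have : q * ((n : ℝ) / log n) ^ ((1 : ℝ) / 2) * 2 ^ (n - 1) ≤ 0 :=
      mul_nonpos_of_nonpos_of_nonneg
        (mul_nonpos_of_nonpos_of_nonneg hq0 (by positivity)) (by positivity)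
    exact this.trans (Nat.cast_nonneg _)
  have hq2 : q ^ 2 / 2 < 1 := by
    have := (lt_sqrt hq0.le).1 hq
    linarith
  have hlim : Tendsto (fun n : ℕ => q / √(log n) + q ^ 2 / 2) atTop (𝓝 (q ^ 2 / 2)) := by
    have := (tendsto_sqrt_atTop.comp (tendsto_log_atTop.comp tendsto_natCast_atTop_atTop))
    simpa using (tendsto_const_nhds.div_atTop this).add_const (q ^ 2 / 2)
  obtain ⟨n₀, hn₀⟩ := eventually_atTop.1
    ((hlim.eventually (gt_mem_nhds hq2)).and (eventually_ge_atTop 2))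
  refine ⟨n₀, fun n hn V _ _ E hcard hE => not_lt.1 fun hsmall => ?_⟩
  rw [← sqrt_eq_rpow] at hsmall
  exact (hn₀ n hn).1.not_ge
    (NotTwoColorable.one_le_div_sqrt_log_add hE (hn₀ n hn).2 hcard hsmall.le)
end

section
/- Let H = (V,E) be a hypergraph with finite vertex set, let r ≥ 1 be an integer, and let f : E → {1,…,r} be a labeling of the edges. If there exists a coloring c : V → {1,…,r} such that no edge A ∈ E has all of its vertices colored with the color f(A), then any ordering σ of V that lists the vertices in nondecreasing order of their colors (i.e., c(v) < c(u) implies σ(v) < σ(u)) contains no strong ordered r-chain in σ with respect to f. -/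
/-- `A : Fin r → Finset V` is an ordered `r`-chain with respect to the ordering `σ`:
(1) consecutive edges meet in exactly one vertex; (2) non-consecutive edges are disjoint;
(3) every vertex of `A i` precedes (in `σ`) every vertex of `A (i+1)`. -/
def IsOrderedChain {V : Type*} [DecidableEq V] (σ : V → ℕ) {r : ℕ}
    (A : Fin r → Finset V) : Prop :=
  (∀ i j : Fin r, (i : ℕ) + 1 = (j : ℕ) → (A i ∩ A j).card = 1) ∧
  (∀ i j : Fin r, (i : ℕ) + 1 < (j : ℕ) → A i ∩ A j = ∅) ∧
  (∀ i j : Fin r, (i : ℕ) + 1 = (j : ℕ) → ∀ v ∈ A i, ∀ u ∈ A j, σ v ≤ σ u)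

/-- A strong ordered `r`-chain with respect to `σ` and a labeling `f` of the edges:
an ordered `r`-chain whose `i`-th edge carries label `i`. -/
def IsStrongOrderedChain {V : Type*} [DecidableEq V] (σ : V → ℕ) {r : ℕ}
    (f : Finset V → Fin r) (A : Fin r → Finset V) : Prop :=
  IsOrderedChain σ A ∧ ∀ i : Fin r, f (A i) = i

/-!
Colors are nondecreasing along the chain, since `σ` sorts the vertices by color and each edge
precedes the next. Every edge `A i` has a vertex whose color is not its label `i`; by induction
on `i` that vertex has color greater than `i`, which is impossible for the last edge.
-/

section ColorInduction

variable {V : Type*} {n : ℕ} {A : Fin (n + 1) → Finset V} {c : V → Fin (n + 1)}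

theorem exists_mem_lt_color (hbad : ∀ i, ∃ v ∈ A i, c v ≠ i)
    (hle : ∀ i : Fin n, ∀ v ∈ A i.castSucc, ∀ u ∈ A i.succ, c v ≤ c u) :
    ∀ i, ∃ v ∈ A i, i < c v := by
  intro i
  induction i using Fin.induction with
  | zero =>
    obtain ⟨v, hv, hne⟩ := hbad 0
    exact ⟨v, hv, Fin.pos_iff_ne_zero.mpr hne⟩
  | succ i ih =>
    obtain ⟨v, hv, hlt⟩ := ih
    obtain ⟨u, hu, hne⟩ := hbad i.succ
    have hvu : i.succ ≤ c u := Fin.castSucc_lt_iff_succ_le.mp (hlt.trans_le (hle i v hv u hu))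
    exact ⟨u, hu, lt_of_le_of_ne hvu hne.symm⟩

theorem not_forall_exists_mem_color_ne
    (hle : ∀ i : Fin n, ∀ v ∈ A i.castSucc, ∀ u ∈ A i.succ, c v ≤ c u) :
    ¬ ∀ i, ∃ v ∈ A i, c v ≠ i := fun hbad => by
  obtain ⟨v, -, hlt⟩ := exists_mem_lt_color hbad hle (Fin.last n)
  exact (Fin.le_last (c v)).not_gt hlt

end ColorInduction

theorem IsOrderedChain.color_le_of_succ {V : Type*} [DecidableEq V] {σ : V → ℕ} {r : ℕ}
    {A : Fin r → Finset V} {c : V → Fin r} (hA : IsOrderedChain σ A)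
    (hmono : ∀ v u : V, c v < c u → σ v < σ u) {i j : Fin r} (hij : (i : ℕ) + 1 = j)
    {v u : V} (hv : v ∈ A i) (hu : u ∈ A j) : c v ≤ c u :=
  not_lt.mp fun h => (hA.2.2 i j hij v hv u hu).not_gt (hmono u v h)

theorem stmt_7_general {V : Type} [DecidableEq V] (E : Finset (Finset V))
    (r : ℕ) (hr : 1 ≤ r) (f : Finset V → Fin r)
    (c : V → Fin r) (hc : ∀ A ∈ E, ¬ ∀ v ∈ A, c v = f A)
    (σ : V → ℕ)
    (hmono : ∀ v u : V, c v < c u → σ v < σ u) :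
    ¬ ∃ A : Fin r → Finset V, (∀ i, A i ∈ E) ∧ IsStrongOrderedChain σ f A := by
  rintro ⟨A, hAE, hchain, hf⟩
  obtain ⟨n, rfl⟩ := Nat.exists_eq_add_of_le' hr
  have hbad : ∀ i, ∃ v ∈ A i, c v ≠ i := fun i => by
    simpa [hf i] using hc (A i) (hAE i)
  exact not_forall_exists_mem_color_ne
    (fun i v hv u hu => hchain.color_le_of_succ hmono rfl hv hu) hbad

/-- Proposition 2, (i) ⇒ (ii): if some coloring `c` is such that no edge `A` is entirely
colored `f A`, then any ordering `σ` listing the vertices in nondecreasing order of colors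
admits no strong ordered `r`-chain w.r.t. `f`. -/
theorem stmt_7 {V : Type} [Fintype V] [DecidableEq V] (E : Finset (Finset V))
    (r : ℕ) (hr : 1 ≤ r) (f : Finset V → Fin r)
    (c : V → Fin r) (hc : ∀ A ∈ E, ¬ ∀ v ∈ A, c v = f A)
    (σ : V → ℕ) (hσ : Function.Injective σ)
    (hmono : ∀ v u : V, c v < c u → σ v < σ u) :
    ¬ ∃ A : Fin r → Finset V, (∀ i, A i ∈ E) ∧ IsStrongOrderedChain σ f A :=
  stmt_7_general E r hr f c hc σ hmono
end
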